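/- Fix a subset A ⊂ [n] with |A| = k - j (to serve as I ∩ J) and a 2j-element subset D ⊂ [n] disjoint from A, with j ≥ 1 (to serve as the symmetric difference I Δ J). Then the number of unordered pairs {I, J} of distinct k-subsets of [n] with I ∩ J = A, I Δ J = D, and I, J weakly separated, equals j. -/
import Mathlib


open Finset

/-- `allLT I J` means `max I < min J` (vacuously true if either set is empty). -/
def allLT (I J : Finset ℕ) : Prop := ∀ i ∈ I, ∀ j ∈ J, i < j

/-- `I` and `J` are weakly separated. -/
def WeaklySeparated (I J : Finset ℕ) : Prop :=
  (∃ I1 I2 : Finset ℕ, Disjoint I1 I2 ∧ I1 ∪ I2 = I \ J ∧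
      allLT I1 (J \ I) ∧ allLT (J \ I) I2) ∨
  (∃ J1 J2 : Finset ℕ, Disjoint J1 J2 ∧ J1 ∪ J2 = J \ I ∧
      allLT J1 (I \ J) ∧ allLT (I \ J) J2)

/-- the set `{i_a, i_{a+1}, ..., i_b}` of entries of `I` in (1-indexed) positions `a` to `b`. -/
def posSlice (I : Finset ℕ) (a b : ℕ) : Finset ℕ :=
  I.filter fun x => a ≤ (I.filter (· ≤ x)).card ∧ (I.filter (· ≤ x)).card ≤ b

/-- the pair of `k`-subsets `I`, `J` is noncrossing. -/
def Noncrossing (k : ℕ) (I J : Finset ℕ) : Prop :=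
  ∀ a b : ℕ, 1 ≤ a → a < b → b ≤ k →
    WeaklySeparated (posSlice I a b) (posSlice J a b) ∨
    posSlice I (a + 1) (b - 1) ≠ posSlice J (a + 1) (b - 1)

/-- the `a`-th smallest entry of `I` (1-indexed). -/
def nth (I : Finset ℕ) (a : ℕ) : ℕ := (I.sort (· ≤ ·)).getD (a - 1) 0

/-- `T` is a rectangular semistandard Young tableau with entries in `[n]`. -/
def IsSSYT {k m : ℕ} (n : ℕ) (T : Fin k → Fin m → ℕ) : Prop :=
  (∀ i j, T i j ∈ Finset.Icc 1 n) ∧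
  (∀ i (j j' : Fin m), j ≤ j' → T i j ≤ T i j') ∧
  (∀ (i i' : Fin k) j, i < i' → T i j < T i' j)

def rk (D : Finset ℕ) (x : ℕ) : ℕ := (D.filter (· ≤ x)).card

lemma mem_posSlice {D : Finset ℕ} {a b x : ℕ} :
    x ∈ posSlice D a b ↔ x ∈ D ∧ a ≤ rk D x ∧ rk D x ≤ b := Finset.mem_filter

lemma rk_lt_rk {D : Finset ℕ} {x y : ℕ} (hy : y ∈ D) (h : x < y) :
    rk D x < rk D y := by
  apply Finset.card_lt_card
  rw [Finset.ssubset_iff_of_subset]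
  · exact ⟨y, Finset.mem_filter.mpr ⟨hy, le_refl y⟩, by simp [h.not_ge]⟩
  · intro z hz
    rw [Finset.mem_filter] at *
    exact ⟨hz.1, hz.2.trans h.le⟩

lemma lt_of_rk_lt {D : Finset ℕ} {x y : ℕ} (hx : x ∈ D) (h : rk D x < rk D y) :
    x < y := by
  by_contra hc
  push_neg at hc
  rcases hc.lt_or_eq with h' | h'
  · exact absurd (rk_lt_rk hx h') (by omega)
  · subst h'; omega

lemma rk_mem {D : Finset ℕ} {x : ℕ} (hx : x ∈ D) : 1 ≤ rk D x ∧ rk D x ≤ D.card := by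
  constructor
  · exact Finset.card_pos.mpr ⟨x, Finset.mem_filter.mpr ⟨hx, le_refl x⟩⟩
  · exact Finset.card_le_card (Finset.filter_subset _ _)

lemma rk_injOn {D : Finset ℕ} {x y : ℕ} (hx : x ∈ D) (hy : y ∈ D)
    (h : rk D x = rk D y) : x = y := by
  rcases lt_trichotomy x y with h' | h' | h'
  · exact absurd (rk_lt_rk hy h') (by omega)
  · exact h'
  · exact absurd (rk_lt_rk hx h') (by omega)

lemma rk_image {D : Finset ℕ} : D.image (rk D) = Finset.Icc 1 D.card := by
  apply Finset.eq_of_subset_of_card_le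
  · intro v hv
    obtain ⟨x, hx, rfl⟩ := Finset.mem_image.mp hv
    exact Finset.mem_Icc.mpr (rk_mem hx)
  · rw [Nat.card_Icc,
      Finset.card_image_of_injOn (fun x hx y hy h => rk_injOn hx hy h)]
    omega

lemma exists_rk {D : Finset ℕ} {v : ℕ} (h1 : 1 ≤ v) (h2 : v ≤ D.card) :
    ∃ x ∈ D, rk D x = v := by
  have : v ∈ D.image (rk D) := by rw [rk_image]; exact Finset.mem_Icc.mpr ⟨h1, h2⟩
  exact Finset.mem_image.mp this

lemma posSlice_card {D : Finset ℕ} {a b : ℕ} (h1 : 1 ≤ a) (h2 : b ≤ D.card) (h3 : a ≤ b) :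
    (posSlice D a b).card = b + 1 - a := by
  have himg : (posSlice D a b).image (rk D) = Finset.Icc a b := by
    apply Finset.Subset.antisymm
    · intro v hv
      obtain ⟨x, hx, rfl⟩ := Finset.mem_image.mp hv
      rw [mem_posSlice] at hx
      exact Finset.mem_Icc.mpr ⟨hx.2.1, hx.2.2⟩
    · intro v hv
      rw [Finset.mem_Icc] at hv
      obtain ⟨x, hx, rfl⟩ := exists_rk (le_trans h1 hv.1) (le_trans hv.2 h2)
      exact Finset.mem_image.mpr ⟨x, mem_posSlice.mpr ⟨hx, hv.1, hv.2⟩, rfl⟩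
  have hinj : Set.InjOn (rk D) (posSlice D a b) :=
    fun x hx y hy h => rk_injOn (mem_posSlice.mp hx).1 (mem_posSlice.mp hy).1 h
  have := Finset.card_image_of_injOn hinj
  rw [himg, Nat.card_Icc] at this
  omega

lemma slice_of_sep {D S J1 J2 : Finset ℕ} (hS : S ⊆ D) (hne : S.Nonempty)
    (hd : Disjoint J1 J2) (hu : J1 ∪ J2 = D \ S) (h1 : allLT J1 S) (h2 : allLT S J2) :
    S = posSlice D (J1.card + 1) (J1.card + S.card) := by
  have hJ1D : J1 ⊆ D := fun x hx => (Finset.mem_sdiff.mp (hu ▸ Finset.mem_union_left _ hx)).1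
  have hJ2D : J2 ⊆ D := fun x hx => (Finset.mem_sdiff.mp (hu ▸ Finset.mem_union_right _ hx)).1
  have hJ1S : ∀ x ∈ J1, x ∉ S := fun x hx => (Finset.mem_sdiff.mp (hu ▸ Finset.mem_union_left _ hx)).2
  have hJ2S : ∀ x ∈ J2, x ∉ S := fun x hx => (Finset.mem_sdiff.mp (hu ▸ Finset.mem_union_right _ hx)).2
  have hcases : ∀ x ∈ D, x ∈ S ∨ x ∈ J1 ∨ x ∈ J2 := by
    intro x hx
    by_cases hxS : x ∈ S
    · exact Or.inl hxS
    · have : x ∈ J1 ∪ J2 := hu ▸ Finset.mem_sdiff.mpr ⟨hx, hxS⟩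
      rcases Finset.mem_union.mp this with h | h
      · exact Or.inr (Or.inl h)
      · exact Or.inr (Or.inr h)
  ext x
  rw [mem_posSlice]
  constructor
  · intro hxS
    refine ⟨hS hxS, ?_, ?_⟩
    · have hsub : insert x J1 ⊆ D.filter (· ≤ x) := by
        intro z hz
        rcases Finset.mem_insert.mp hz with rfl | hz
        · exact Finset.mem_filter.mpr ⟨hS hxS, le_refl z⟩
        · exact Finset.mem_filter.mpr ⟨hJ1D hz, (h1 z hz x hxS).le⟩
      have hxn : x ∉ J1 := fun hc => hJ1S x hc hxS
      have := Finset.card_le_card hsub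
      rw [Finset.card_insert_of_notMem hxn] at this
      unfold rk; omega
    · have hsub : D.filter (· ≤ x) ⊆ J1 ∪ S := by
        intro z hz
        rw [Finset.mem_filter] at hz
        rcases hcases z hz.1 with h | h | h
        · exact Finset.mem_union_right _ h
        · exact Finset.mem_union_left _ h
        · exact absurd hz.2 (h2 x hxS z h).not_ge
      have := (Finset.card_le_card hsub).trans (Finset.card_union_le _ _)
      unfold rk; omega
  · rintro ⟨hxD, hlo, hhi⟩
    rcases hcases x hxD with h | h | h
    · exact h
    · exfalso
      have hsub : D.filter (· ≤ x) ⊆ J1 := by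
        intro z hz
        rw [Finset.mem_filter] at hz
        rcases hcases z hz.1 with h' | h' | h'
        · exact absurd hz.2 (h1 x h z h').not_ge
        · exact h'
        · obtain ⟨s, hs⟩ := hne
          exact absurd hz.2 ((h1 x h s hs).trans (h2 s hs z h')).not_ge
      have := Finset.card_le_card hsub
      unfold rk at hlo; omega
    · exfalso
      have hdSJ1 : Disjoint J1 S := Finset.disjoint_left.mpr hJ1S
      have hxn : x ∉ J1 ∪ S := by
        rw [Finset.mem_union]
        rintro (h' | h')
        · exact (Finset.disjoint_left.mp hd h') h
        · exact hJ2S x h h'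
      have hsub : insert x (J1 ∪ S) ⊆ D.filter (· ≤ x) := by
        intro z hz
        rcases Finset.mem_insert.mp hz with rfl | hz
        · exact Finset.mem_filter.mpr ⟨hxD, le_refl z⟩
        · rcases Finset.mem_union.mp hz with h' | h'
          · obtain ⟨s, hs⟩ := hne
            exact Finset.mem_filter.mpr ⟨hJ1D h', ((h1 z h' s hs).trans (h2 s hs x h)).le⟩
          · exact Finset.mem_filter.mpr ⟨hS h', (h2 z h' x h).le⟩
      have := Finset.card_le_card hsub
      rw [Finset.card_insert_of_notMem hxn, Finset.card_union_of_disjoint hdSJ1] at this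
      unfold rk at hhi; omega

lemma union_sdiff_union (A X Y : Finset ℕ) (hAX : Disjoint A X) (hXY : Disjoint X Y) :
    (A ∪ X) \ (A ∪ Y) = X := by
  ext x
  simp only [Finset.mem_sdiff, Finset.mem_union, not_or]
  constructor
  · rintro ⟨h | h, hA', hY'⟩
    · exact absurd h hA'
    · exact h
  · intro h
    exact ⟨Or.inr h, Finset.disjoint_right.mp hAX h, Finset.disjoint_left.mp hXY h⟩


/-- With intersection `A` and symmetric difference `D` fixed, there are exactly `j`
unordered weakly separated pairs of distinct `k`-subsets. -/
theorem count_weakly_separated_pairs_fixed_intersection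
    (n k j : ℕ) (hj : 1 ≤ j) (hjk : j ≤ k)
    (A D : Finset ℕ) (hA : A ⊆ Finset.Icc 1 n) (hD : D ⊆ Finset.Icc 1 n)
    (hdisj : Disjoint A D) (hAcard : A.card = k - j) (hDcard : D.card = 2 * j) :
    (@Finset.filter (Finset (Finset ℕ))
        (fun P => ∃ I ∈ P, ∃ J ∈ P, I ≠ J ∧ I ∩ J = A ∧ (I \ J) ∪ (J \ I) = D ∧
          WeaklySeparated I J)
        (Classical.decPred _)
        ((((Finset.Icc 1 n).powersetCard k)).powersetCard 2)).card = j := by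
  
  classical
  set T : ℕ → Finset ℕ := fun a => posSlice D a (a + j - 1) with hT
  set F : ℕ → Finset (Finset ℕ) := fun a => {A ∪ T a, A ∪ (D \ T a)} with hF
  have hTsub : ∀ a, T a ⊆ D := fun a => Finset.filter_subset _ _
  have hTmem : ∀ a x, x ∈ T a ↔ x ∈ D ∧ a ≤ rk D x ∧ rk D x ≤ a + j - 1 :=
    fun a x => mem_posSlice
  have hTcard : ∀ a, 1 ≤ a → a ≤ j + 1 → (T a).card = j := by
    intro a h1 h2
    rw [hT]
    rw [posSlice_card h1 (by omega) (by omega)]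
    omega
  have hcompl : ∀ a, 1 ≤ a → a ≤ j + 1 → (D \ T a).card = j := by
    intro a h1 h2
    rw [Finset.card_sdiff_of_subset (hTsub a), hDcard, hTcard a h1 h2]
    omega
  have cancel : ∀ X ⊆ D, ∀ Y ⊆ D, A ∪ X = A ∪ Y → X = Y := by
    intro X hX Y hY h
    have hx : X = (A ∪ X) \ A :=
      (Finset.union_sdiff_cancel_left (hdisj.mono_right hX)).symm
    have hy : Y = (A ∪ Y) \ A :=
      (Finset.union_sdiff_cancel_left (hdisj.mono_right hY)).symm
    rw [hx, hy, h]
  have hF1 : F (j + 1) = F 1 := by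
    have hTc : T (j + 1) = D \ T 1 := by
      ext x
      rw [hTmem, Finset.mem_sdiff, hTmem]
      constructor
      · rintro ⟨hx, h1, h2⟩
        exact ⟨hx, fun ⟨_, _, h4⟩ => by omega⟩
      · rintro ⟨hx, hn⟩
        have := rk_mem hx
        rw [hDcard] at this
        refine ⟨hx, ?_, by omega⟩
        by_contra hc
        exact hn ⟨hx, by omega, by omega⟩
    have hTc' : D \ T (j + 1) = T 1 := by
      rw [hTc, Finset.sdiff_sdiff_eq_self (hTsub 1)]
    rw [hF]
    show ({A ∪ T (j+1), A ∪ (D \ T (j+1))} : Finset (Finset ℕ)) = {A ∪ T 1, A ∪ (D \ T 1)}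
    rw [hTc', hTc]
    exact Finset.pair_comm _ _
  -- membership of F a in the filtered set
  have hFmem : ∀ a, 1 ≤ a → a ≤ j + 1 →
      F a ∈ (@Finset.filter (Finset (Finset ℕ))
        (fun P => ∃ I ∈ P, ∃ J ∈ P, I ≠ J ∧ I ∩ J = A ∧ (I \ J) ∪ (J \ I) = D ∧
          WeaklySeparated I J)
        (Classical.decPred _)
        ((((Finset.Icc 1 n).powersetCard k)).powersetCard 2)) := by
    intro a h1 h2
    have hTa := hTcard a h1 h2
    have hCa := hcompl a h1 h2
    have hTne : (T a).Nonempty := Finset.card_pos.mp (by omega)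
    have hdisjT : Disjoint A (T a) := hdisj.mono_right (hTsub a)
    have hdisjC : Disjoint A (D \ T a) := hdisj.mono_right (Finset.sdiff_subset)
    have hne : A ∪ T a ≠ A ∪ (D \ T a) := by
      intro h
      have := cancel _ (hTsub a) _ (Finset.sdiff_subset) h
      obtain ⟨x, hx⟩ := hTne
      have : x ∈ D \ T a := this ▸ hx
      exact (Finset.mem_sdiff.mp this).2 hx
    have hIJinter : (A ∪ T a) ∩ (A ∪ (D \ T a)) = A := by
      ext x
      simp only [Finset.mem_inter, Finset.mem_union, Finset.mem_sdiff]
      constructor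
      · rintro ⟨h | h, h' | h'⟩
        · exact h
        · exact h
        · exact h'
        · exact absurd h h'.2
      · intro h; exact ⟨Or.inl h, Or.inl h⟩
    have hIdiff : (A ∪ T a) \ (A ∪ (D \ T a)) = T a :=
      union_sdiff_union A _ _ hdisjT Finset.disjoint_sdiff
    have hJdiff : (A ∪ (D \ T a)) \ (A ∪ T a) = D \ T a :=
      union_sdiff_union A _ _ hdisjC Finset.sdiff_disjoint
    simp only [Finset.mem_filter]
    constructor
    · rw [Finset.mem_powersetCard]
      constructor
      · intro X hX
        rw [hF] at hX
        simp only [Finset.mem_insert, Finset.mem_singleton] at hX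
        rw [Finset.mem_powersetCard]
        rcases hX with rfl | rfl
        · exact ⟨Finset.union_subset hA (fun x hx => hD (hTsub a hx)),
            by rw [Finset.card_union_of_disjoint hdisjT, hAcard, hTa]; omega⟩
        · exact ⟨Finset.union_subset hA (fun x hx => hD (Finset.mem_sdiff.mp hx).1),
            by rw [Finset.card_union_of_disjoint hdisjC, hAcard, hCa]; omega⟩
      · exact Finset.card_pair hne
    · refine ⟨A ∪ T a, Finset.mem_insert_self _ _, A ∪ (D \ T a),
        Finset.mem_insert_of_mem (Finset.mem_singleton_self _), hne, hIJinter, ?_, ?_⟩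
      · rw [hIdiff, hJdiff, Finset.union_sdiff_of_subset (hTsub a)]
      · right
        refine ⟨posSlice D 1 (a - 1), posSlice D (a + j) (2 * j), ?_, ?_, ?_, ?_⟩
        · rw [Finset.disjoint_left]
          intro x hx hx'
          rw [mem_posSlice] at hx hx'
          omega
        · rw [hJdiff]
          ext x
          rw [Finset.mem_union, mem_posSlice, mem_posSlice, Finset.mem_sdiff, hTmem]
          constructor
          · rintro (⟨hx, h3, h4⟩ | ⟨hx, h3, h4⟩) <;>
              exact ⟨hx, fun ⟨_, h5, h6⟩ => by omega⟩
          · rintro ⟨hx, hn⟩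
            have := rk_mem hx
            rw [hDcard] at this
            by_cases hc : rk D x ≤ a - 1
            · exact Or.inl ⟨hx, by omega, hc⟩
            · refine Or.inr ⟨hx, ?_, by omega⟩
              by_contra hc2
              exact hn ⟨hx, by omega, by omega⟩
        · rw [hIdiff]
          intro x hx y hy
          rw [mem_posSlice] at hx
          rw [hTmem] at hy
          exact lt_of_rk_lt hx.1 (by omega)
        · rw [hIdiff]
          intro x hx y hy
          rw [hTmem] at hx
          rw [mem_posSlice] at hy
          exact lt_of_rk_lt hx.1 (by omega)
  set Q := (@Finset.filter (Finset (Finset ℕ))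
        (fun P => ∃ I ∈ P, ∃ J ∈ P, I ≠ J ∧ I ∩ J = A ∧ (I \ J) ∪ (J \ I) = D ∧
          WeaklySeparated I J)
        (Classical.decPred _)
        ((((Finset.Icc 1 n).powersetCard k)).powersetCard 2)) with hQdef
  have hQ : Q = (Finset.Icc 1 j).image F := by
    apply Finset.Subset.antisymm
    · intro P hP
      rw [hQdef] at hP
      simp only [Finset.mem_filter] at hP
      obtain ⟨hPmem, I, hIP, J, hJP, hne, hinter, hunion, hws⟩ := hP
      rw [Finset.mem_powersetCard] at hPmem
      obtain ⟨hPsub, hPcard⟩ := hPmem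
      have hI := (Finset.mem_powersetCard.mp (hPsub hIP)).2
      have hJ := (Finset.mem_powersetCard.mp (hPsub hJP)).2
      have hPeq : P = {I, J} := by
        refine (Finset.eq_of_subset_of_card_le ?_ ?_).symm
        · intro X hX
          rcases Finset.mem_insert.mp hX with rfl | hX
          · exact hIP
          · rw [Finset.mem_singleton] at hX; exact hX ▸ hJP
        · rw [hPcard, Finset.card_pair hne]
      set S := I \ J with hS
      set S' := J \ I with hS'
      have hSD : S ⊆ D := hunion ▸ Finset.subset_union_left
      have hS'D : S' ⊆ D := hunion ▸ Finset.subset_union_right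
      have hdisjSS' : Disjoint S S' := disjoint_sdiff_sdiff
      have hS'c : S' = D \ S := by
        rw [← hunion]
        exact (Finset.union_sdiff_cancel_left hdisjSS').symm
      have hSc : S = D \ S' := by
        rw [hS'c, Finset.sdiff_sdiff_eq_self hSD]
      have hIe : I = A ∪ S := by
        rw [← hinter, hS, Finset.union_comm, Finset.sdiff_union_inter]
      have hJe : J = A ∪ S' := by
        rw [← hinter, hS', Finset.union_comm, Finset.inter_comm, Finset.sdiff_union_inter]
      have hdisjAS : Disjoint A S := hdisj.mono_right hSD
      have hScard : S.card = j := by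
        have := Finset.card_union_of_disjoint hdisjAS
        rw [← hIe, hI, hAcard] at this
        omega
      have hS'card : S'.card = j := by
        rw [hS'c, Finset.card_sdiff_of_subset hSD, hDcard, hScard]
        omega
      have hSne : S.Nonempty := Finset.card_pos.mp (by omega)
      have hS'ne : S'.Nonempty := Finset.card_pos.mp (by omega)
      have wrap : ∀ a, 1 ≤ a → a ≤ j + 1 → P = F a → P ∈ (Finset.Icc 1 j).image F := by
        intro a h1 h2 hPF
        by_cases hc : a ≤ j
        · exact Finset.mem_image.mpr ⟨a, Finset.mem_Icc.mpr ⟨h1, hc⟩, hPF.symm⟩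
        · have ha : a = j + 1 := by omega
          subst ha
          exact Finset.mem_image.mpr ⟨1, Finset.mem_Icc.mpr ⟨le_refl 1, hj⟩, by rw [← hF1, hPF]⟩
      have Teq : ∀ c : ℕ, c ≤ j → ∀ X : Finset ℕ, X.card = j →
          X = posSlice D (c + 1) (c + X.card) → X = T (c + 1) := by
        intro c hc X hXc hXeq
        rw [hXeq, hXc]
        have h5 : c + 1 + j - 1 = c + j := by omega
        show posSlice D (c + 1) (c + j) = posSlice D (c + 1) (c + 1 + j - 1)
        rw [h5]
      rcases hws with ⟨I1, I2, hd12, hu12, hlt1, hlt2⟩ | ⟨J1, J2, hd12, hu12, hlt1, hlt2⟩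
      · -- S' is a slice
        rw [← hS] at hu12
        rw [← hS'] at hlt1 hlt2
        have hu12' : I1 ∪ I2 = D \ S' := by rw [hu12, hSc]
        have hslice := slice_of_sep hS'D hS'ne hd12 hu12' hlt1 hlt2
        have hI1 : I1.card ≤ j := by
          have : I1 ⊆ S := hu12 ▸ Finset.subset_union_left
          have := Finset.card_le_card this
          omega
        have hTeq : S' = T (I1.card + 1) := Teq I1.card hI1 S' hS'card (hS'card ▸ hslice)
        apply wrap (I1.card + 1) (by omega) (by omega)
        have hSeq : S = D \ T (I1.card + 1) := by rw [hSc, hTeq]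
        rw [hPeq, hIe, hJe, hSeq, hTeq, hF]
        exact Finset.pair_comm _ _
      · rw [← hS'] at hu12
        rw [← hS] at hlt1 hlt2
        have hu12' : J1 ∪ J2 = D \ S := by rw [hu12, hS'c]
        have hslice := slice_of_sep hSD hSne hd12 hu12' hlt1 hlt2
        have hJ1 : J1.card ≤ j := by
          have : J1 ⊆ S' := hu12 ▸ Finset.subset_union_left
          have := Finset.card_le_card this
          omega
        have hTeq : S = T (J1.card + 1) := Teq J1.card hJ1 S hScard (hScard ▸ hslice)
        apply wrap (J1.card + 1) (by omega) (by omega)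
        have hS'eq : S' = D \ T (J1.card + 1) := by rw [hS'c, hTeq]
        rw [hPeq, hIe, hJe, hS'eq, hTeq, hF]
    · intro P hP
      obtain ⟨a, ha, rfl⟩ := Finset.mem_image.mp hP
      rw [Finset.mem_Icc] at ha
      exact hFmem a ha.1 (by omega)
  have hinj : Set.InjOn F (Finset.Icc 1 j) := by
    intro a ha a' ha' h
    simp only [Finset.coe_Icc, Set.mem_Icc] at ha ha'
    have hmem : A ∪ T a ∈ F a' := h ▸ Finset.mem_insert_self _ _
    rw [hF] at hmem
    rcases Finset.mem_insert.mp hmem with h' | h'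
    · have hTT : T a = T a' := cancel _ (hTsub a) _ (hTsub a') h'
      obtain ⟨x, hx, hrx⟩ := exists_rk (v := a) (by omega) (by rw [hDcard]; omega)
      obtain ⟨y, hy, hry⟩ := exists_rk (v := a') (by omega) (by rw [hDcard]; omega)
      have hxa : x ∈ T a := (hTmem a x).mpr ⟨hx, by omega, by omega⟩
      have hya' : y ∈ T a' := (hTmem a' y).mpr ⟨hy, by omega, by omega⟩
      have h1 := (hTmem a' x).mp (hTT ▸ hxa)
      have h2 : y ∈ T a := by rw [hTT]; exact hya'
      have h3 := (hTmem a y).mp h2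
      omega
    · rw [Finset.mem_singleton] at h'
      have hTT : T a = D \ T a' := cancel _ (hTsub a) _ Finset.sdiff_subset h'
      exfalso
      obtain ⟨z, hz, hrz⟩ := exists_rk (v := j) (by omega) (by rw [hDcard]; omega)
      have hza : z ∈ T a := (hTmem a z).mpr ⟨hz, by omega, by omega⟩
      have hza' : z ∈ T a' := (hTmem a' z).mpr ⟨hz, by omega, by omega⟩
      have : z ∈ D \ T a' := hTT ▸ hza
      exact (Finset.mem_sdiff.mp this).2 hza'
  rw [hQ, Finset.card_image_of_injOn hinj, Nat.card_Icc]
  omega
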